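/- arXiv:math/0208189 — 3 statements merged into one kernel-verified Lean document; each statement's English description precedes it below -/
import Mathlib

section
/- For every endomorphism φ of a finitely generated free group F, there exists k > 0 such that ker(φ^k) = ker(φ^n) for all n ≥ k. -/
/-!
The images `Hₙ = φⁿ(F)` are free by Nielsen–Schreier, and their ranks do not increase with `n`:
a surjection of free groups cannot increase the rank, as one sees by counting homomorphisms to
`ℤ/2`. At an index `n` of minimal rank, `φ` maps `Hₙ` onto `Hₙ₊₁ ≅ Hₙ`. Free groups are residually
finite (extend left multiplication by the generators to permutations of the suffixes of a word),
so by Mal'cev's argument finitely generated ones are Hopfian, and `φ` is injective on `Hₙ`.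
Hence `ker φᵏ⁺¹ = ker φᵏ` for every `k ≥ n`.
-/

open Function

theorem Finset.exists_perm_apply_eq_mul {G : Type*} [Group G] (P : Finset G) (g : G) :
    ∃ σ : Equiv.Perm P, ∀ x : P, g * (x : G) ∈ P → (σ x : G) = g * x :=
  Set.MapsTo.exists_equiv_extend_of_card_eq (Fintype.card_coe P) (s := {x : P | g * (x : G) ∈ P})
    (fun _ hx => hx) fun _ _ _ _ h => Subtype.ext (mul_left_cancel h)

namespace FreeGroup

variable {α : Type*}

theorem lift_mk_apply_one {P : Finset (FreeGroup α)} (σ : α → Equiv.Perm P)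
    (hσ : ∀ a (x : P), of a * (x : FreeGroup α) ∈ P → (σ a x : FreeGroup α) = of a * x)
    (h1 : (1 : FreeGroup α) ∈ P) {L : List (α × Bool)} (hL : ∀ t, t <:+ L → mk t ∈ P) :
    (lift σ (mk L) ⟨1, h1⟩ : FreeGroup α) = mk L := by
  induction L with
  | nil => simp [one_eq_mk]
  | cons x L ih =>
    have hL' : mk L ∈ P := hL L (List.suffix_cons x L)
    have hy : lift σ (mk L) ⟨1, h1⟩ = ⟨mk L, hL'⟩ :=
      Subtype.ext (ih fun t ht => hL t (ht.trans (List.suffix_cons x L)))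
    have hxL := hL _ List.suffix_rfl
    obtain ⟨a, _ | _⟩ := x
    · have hmk : mk ((a, false) :: L) = (of a)⁻¹ * mk L := (mul_mk (L₁ := [(a, false)])).symm
      rw [hmk] at hxL ⊢
      have hσ' : σ a ⟨_, hxL⟩ = ⟨mk L, hL'⟩ := Subtype.ext <| by
        rw [hσ a _ (by simpa using hL'), mul_inv_cancel_left]
      rw [_root_.map_mul, _root_.map_inv, lift_apply_of, Equiv.Perm.mul_apply, hy,
        Equiv.Perm.inv_eq_iff_eq.mpr hσ'.symm]
    · have hmk : mk ((a, true) :: L) = of a * mk L := (mul_mk (L₁ := [(a, true)])).symm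
      rw [hmk] at hxL ⊢
      rw [_root_.map_mul, lift_apply_of, Equiv.Perm.mul_apply, hy, hσ a _ hxL]

instance residuallyFinite : Group.ResiduallyFinite (FreeGroup α) := by
  classical
  refine Group.residuallyFinite_of_forall_exists_finite_monoidHom fun w hw => ?_
  let P : Finset (FreeGroup α) := (w.toWord.tails.map mk).toFinset
  have hP : ∀ t, t <:+ w.toWord → mk t ∈ P := fun t ht => by
    simpa [P] using ⟨t, ht, rfl⟩
  have h1 : (1 : FreeGroup α) ∈ P := hP [] List.nil_suffix
  choose σ hσ using fun a => Finset.exists_perm_apply_eq_mul P (of a)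
  refine ⟨Equiv.Perm P, inferInstance, inferInstance, lift σ, fun h => hw ?_⟩
  have hw1 := lift_mk_apply_one σ hσ h1 hP
  rw [mk_toWord, h] at hw1
  exact hw1.symm

end FreeGroup

instance Group.FG.finite_monoidHom {G M : Type*} [Group G] [Group.FG G] [Monoid M] [Finite M] :
    Finite (G →* M) := by
  obtain ⟨S, hS⟩ := Group.FG.out (G := G)
  exact .of_injective (fun f (s : S) => f s) fun f g h =>
    MonoidHom.eq_of_eqOn_dense hS fun s hs => congrFun h ⟨s, hs⟩

theorem Group.ResiduallyFinite.injective_of_surjective {G : Type*} [Group G] [Group.FG G]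
    [Group.ResiduallyFinite G] {f : G →* G} (hf : Surjective f) : Injective f := by
  refine (injective_iff_map_eq_one f).mpr fun x hx => by_contra fun hx1 => ?_
  obtain ⟨N, hxN⟩ := Group.exists_finiteIndexNormalSubgroup_notMem x hx1
  have hcomp : Injective fun g : G →* G ⧸ N.toSubgroup => g.comp f :=
    fun _ _ h => (MonoidHom.cancel_right hf).mp h
  obtain ⟨g, hg⟩ := Finite.injective_iff_surjective.mp hcomp (QuotientGroup.mk' N.toSubgroup)
  refine hxN ((QuotientGroup.eq_one_iff x).mp ?_)
  rw [← QuotientGroup.mk'_apply, ← hg, MonoidHom.comp_apply, hx, map_one]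

namespace FreeGroupBasis

variable {ι ι' G H : Type*} [Group G] [Group H]

theorem card_le_of_surjective [Finite ι] (b : FreeGroupBasis ι G) (b' : FreeGroupBasis ι' H)
    {f : G →* H} (hf : Surjective f) : Finite ι' ∧ Nat.card ι' ≤ Nat.card ι := by
  let Q := Multiplicative (ZMod 2)
  have hcomp : Injective fun g : H →* Q => g.comp f := fun _ _ h => (MonoidHom.cancel_right hf).mp h
  have hinj : Injective fun g : ι' → Q => b.lift.symm ((b'.lift g).comp f) :=
    b.lift.symm.injective.comp (hcomp.comp b'.lift.injective)
  have : Finite (ι' → Q) := .of_injective _ hinj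
  have : Finite ι' := (finite_or_infinite ι').resolve_right fun _ => not_finite (ι' → Q)
  refine ⟨this, ?_⟩
  have hcard := Nat.card_le_card_of_injective _ hinj
  rw [Nat.card_fun, Nat.card_fun] at hcard
  exact (Nat.pow_le_pow_iff_right (by simp [Q])).mp hcard

theorem nonempty_mulEquiv_of_card_eq [Finite ι] [Finite ι'] (b : FreeGroupBasis ι G)
    (b' : FreeGroupBasis ι' H) (h : Nat.card ι = Nat.card ι') : Nonempty (G ≃* H) := by
  obtain ⟨e⟩ := Finite.card_eq.mp h
  exact ⟨b.repr.trans ((FreeGroup.freeGroupCongr e).trans b'.repr.symm)⟩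

end FreeGroupBasis

namespace Monoid.End

variable {G : Type*} [Group G] (φ : Monoid.End G)

theorem mem_ker_pow_iff {n : ℕ} {x : G} : x ∈ (φ ^ n).ker ↔ φ^[n] x = 1 := Iff.rfl

theorem mem_range_pow_iff {n : ℕ} {y : G} : y ∈ (φ ^ n).range ↔ ∃ x, φ^[n] x = y := Iff.rfl

theorem ker_pow_succ_eq_of_injOn {n k : ℕ} (h : Set.InjOn φ (φ ^ n).range) (hk : n ≤ k) :
    (φ ^ (k + 1)).ker = (φ ^ k).ker := by
  ext x
  rw [mem_ker_pow_iff, mem_ker_pow_iff, iterate_succ_apply']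
  refine ⟨fun hx => h ?_ (one_mem _) (hx.trans (map_one φ).symm), fun hx => by rw [hx, map_one]⟩
  exact (mem_range_pow_iff φ).mpr ⟨φ^[k - n] x, by rw [← iterate_add_apply, Nat.add_sub_cancel' hk]⟩

theorem ker_pow_eq_of_injOn {n k : ℕ} (h : Set.InjOn φ (φ ^ n).range) (hk : n ≤ k) :
    (φ ^ k).ker = (φ ^ n).ker := by
  induction k, hk using Nat.le_induction with
  | base => rfl
  | succ k hk ih => rw [ker_pow_succ_eq_of_injOn φ h hk, ih]

theorem exists_surjective_range_pow (n : ℕ) :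
    ∃ ψ : (φ ^ n).range →* (φ ^ (n + 1)).range, Surjective ψ ∧ ∀ x, (ψ x : G) = φ x := by
  let ψ : (φ ^ n).range →* (φ ^ (n + 1)).range :=
    (MonoidHom.domRestrict φ (φ ^ n).range).codRestrict (φ ^ (n + 1)).range fun x => by
      obtain ⟨z, hz⟩ := (mem_range_pow_iff φ).mp x.2
      exact (mem_range_pow_iff φ).mpr ⟨z, by rw [iterate_succ_apply', hz]; rfl⟩
  refine ⟨ψ, fun y => ?_, fun _ => rfl⟩
  obtain ⟨z, hz⟩ := (mem_range_pow_iff φ).mp y.2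
  exact ⟨⟨φ^[n] z, (mem_range_pow_iff φ).mpr ⟨z, rfl⟩⟩,
    Subtype.ext (by rw [← hz, iterate_succ_apply']; rfl)⟩

end Monoid.End

theorem FreeGroup.exists_injOn_range_pow {α : Type*} [Finite α] (φ : Monoid.End (FreeGroup α)) :
    ∃ n, Set.InjOn φ (φ ^ n).range := by
  -- The ranges carry the Nielsen–Schreier instance `subgroupIsFreeOfIsFree`.
  have hfin (n : ℕ) : Finite (IsFreeGroup.Generators (φ ^ n).range) :=
    ((FreeGroupBasis.ofFreeGroup α).card_le_of_surjective (IsFreeGroup.basis _)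
      (φ ^ n).rangeRestrict_surjective).1
  let r (n : ℕ) := Nat.card (IsFreeGroup.Generators (φ ^ n).range)
  let n := Function.argmin r
  have := hfin n
  have := hfin (n + 1)
  obtain ⟨ψ, hψ, hψφ⟩ := Monoid.End.exists_surjective_range_pow φ n
  have hr : Nat.card (IsFreeGroup.Generators (φ ^ (n + 1)).range) = r n :=
    le_antisymm ((IsFreeGroup.basis _).card_le_of_surjective (IsFreeGroup.basis _) hψ).2
      (Function.argmin_le r _)
  obtain ⟨e⟩ := (IsFreeGroup.basis _).nonempty_mulEquiv_of_card_eq (IsFreeGroup.basis _) hr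
  have hinj : Injective (e.toMonoidHom.comp ψ) :=
    Group.ResiduallyFinite.injective_of_surjective (e.surjective.comp hψ)
  refine ⟨n, fun x hx y hy hxy => congrArg Subtype.val (@hinj ⟨x, hx⟩ ⟨y, hy⟩ ?_)⟩
  exact congrArg e (Subtype.ext (by rw [hψφ, hψφ]; exact hxy))

theorem kernels_stabilize (m : ℕ) (φ : Monoid.End (FreeGroup (Fin m))) :
    ∃ k : ℕ, 0 < k ∧ ∀ n : ℕ, k ≤ n → MonoidHom.ker (φ ^ k) = MonoidHom.ker (φ ^ n) := by
  obtain ⟨n, h⟩ := FreeGroup.exists_injOn_range_pow φ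
  refine ⟨n + 1, n.succ_pos, fun k hk => ?_⟩
  rw [φ.ker_pow_eq_of_injOn h n.le_succ, φ.ker_pow_eq_of_injOn h (k := k) (by omega)]
end

section
/- Let φ : G → G be an endomorphism of a group G, let N be a normal φ-invariant subgroup contained in the kernel of the canonical map G → M(φ), and let φ̄ : G/N → G/N be the induced endomorphism. Then M(φ) ≅ M(φ̄). -/
open Monoid

/-- The mapping torus `M(φ) = ⟨G, t | t⁻¹ g t = φ(g)⟩` of an endomorphism `φ : G → G`. -/
def mappingTorus {G : Type*} [Group G] (φ : G →* G) : Type _ :=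
  Coprod G (Multiplicative ℤ) ⧸ Subgroup.normalClosure
    {x | ∃ g : G, x = (Coprod.inr (Multiplicative.ofAdd (1 : ℤ)))⁻¹ * Coprod.inl g *
      Coprod.inr (Multiplicative.ofAdd (1 : ℤ)) * (Coprod.inl (φ g))⁻¹}

instance {G : Type*} [Group G] (φ : G →* G) : Group (mappingTorus φ) := by
  unfold mappingTorus; infer_instance

/-- The canonical homomorphism `G → M(φ)`. -/
def mappingTorus.ofBase {G : Type*} [Group G] (φ : G →* G) : G →* mappingTorus φ :=
  (QuotientGroup.mk' _).comp Coprod.inl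

/-- The stable letter `t ∈ M(φ)`. -/
def mappingTorus.t {G : Type*} [Group G] (φ : G →* G) : mappingTorus φ :=
  QuotientGroup.mk' _ (Coprod.inr (Multiplicative.ofAdd (1 : ℤ)))

/-!
Both groups are presented by generators and relations, so homomorphisms in both directions
are given by images of the base group and of the stable letter. The map `M(φ) → M(φ̄)` sends
`g ↦ gN` and `t ↦ t`; the map back sends `gN ↦ g`, which is well defined exactly because `N`
dies in `M(φ)`. The two composites fix the generators, hence are the identities.
-/

namespace mappingTorus

section UniversalProperty

variable {G H : Type*} [Group G] [Group H]

lemma t_inv_mul_ofBase_mul_t (φ : G →* G) (g : G) :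
    (t φ)⁻¹ * ofBase φ g * t φ = ofBase φ (φ g) := by
  have h : (QuotientGroup.mk' _ ((Coprod.inr (Multiplicative.ofAdd (1 : ℤ)))⁻¹ * Coprod.inl g *
      Coprod.inr (Multiplicative.ofAdd (1 : ℤ)) * (Coprod.inl (φ g))⁻¹) : mappingTorus φ) = 1 :=
    (QuotientGroup.eq_one_iff _).2 (Subgroup.subset_normalClosure ⟨g, rfl⟩)
  simp only [map_mul, map_inv] at h
  exact mul_inv_eq_one.mp h

def lift (φ : G →* G) (f : G →* H) (u : H) (hrel : ∀ g : G, u⁻¹ * f g * u = f (φ g)) :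
    mappingTorus φ →* H :=
  QuotientGroup.lift _ (Coprod.lift f (zpowersHom H u)) <| by
    refine Subgroup.normalClosure_le_normal ?_
    rintro _ ⟨g, rfl⟩
    simpa [mul_inv_eq_one] using hrel g

variable (φ : G →* G) (f : G →* H) (u : H) (hrel : ∀ g : G, u⁻¹ * f g * u = f (φ g))

@[simp]
lemma lift_ofBase (g : G) : lift φ f u hrel (ofBase φ g) = f g := by
  show QuotientGroup.lift _ _ _ (QuotientGroup.mk (Coprod.inl g)) = f g
  rw [QuotientGroup.lift_mk, Coprod.lift_apply_inl]

@[simp]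
lemma lift_t : lift φ f u hrel (t φ) = u := by
  show QuotientGroup.lift _ _ _ (QuotientGroup.mk (Coprod.inr _)) = u
  rw [QuotientGroup.lift_mk, Coprod.lift_apply_inr, zpowersHom_apply, toAdd_ofAdd, zpow_one]

def map {ψ : H →* H} (π : G →* H) (hπ : ∀ g, π (φ g) = ψ (π g)) : mappingTorus φ →* mappingTorus ψ :=
  lift φ ((ofBase ψ).comp π) (t ψ) fun g => by
    simpa [hπ] using t_inv_mul_ofBase_mul_t ψ (π g)

@[simp]
lemma map_ofBase {ψ : H →* H} (π : G →* H) (hπ : ∀ g, π (φ g) = ψ (π g)) (g : G) :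
    map φ π hπ (ofBase φ g) = ofBase ψ (π g) :=
  lift_ofBase _ _ _ _ g

@[simp]
lemma map_t {ψ : H →* H} (π : G →* H) (hπ : ∀ g, π (φ g) = ψ (π g)) :
    map φ π hπ (t φ) = t ψ :=
  lift_t _ _ _ _

variable {φ}

lemma hom_ext {f₁ f₂ : mappingTorus φ →* H}
    (hbase : ∀ g, f₁ (ofBase φ g) = f₂ (ofBase φ g)) (ht : f₁ (t φ) = f₂ (t φ)) : f₁ = f₂ := by
  refine QuotientGroup.monoidHom_ext _ (Coprod.hom_ext ?_ ?_)
  · exact MonoidHom.ext hbase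
  · exact MonoidHom.ext_mint ht

end UniversalProperty

section Quotient

variable {G : Type*} [Group G] (φ : G →* G) (N : Subgroup G) [N.Normal] (hinv : N ≤ N.comap φ)

def toQuotient : mappingTorus φ →* mappingTorus (QuotientGroup.map N N φ hinv) :=
  -- Proved by `rw` rather than by a term: the abstracted proof then has exactly this type,
  -- which `simp` needs in order to match `map_ofBase` and `map_t` against `toQuotient`.
  map φ (QuotientGroup.mk' N) fun g => by rw [QuotientGroup.map_mk']; rfl

def ofQuotient (hker : N ≤ (ofBase φ).ker) :
    mappingTorus (QuotientGroup.map N N φ hinv) →* mappingTorus φ :=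
  lift _ (QuotientGroup.lift N (ofBase φ) hker) (t φ) fun x =>
    QuotientGroup.induction_on x fun g => by simpa using t_inv_mul_ofBase_mul_t φ g

variable (hker : N ≤ (ofBase φ).ker)

lemma ofQuotient_comp_toQuotient :
    (ofQuotient φ N hinv hker).comp (toQuotient φ N hinv) = MonoidHom.id _ :=
  hom_ext (fun g => by simp [toQuotient, ofQuotient]) (by simp [toQuotient, ofQuotient])

lemma toQuotient_comp_ofQuotient :
    (toQuotient φ N hinv).comp (ofQuotient φ N hinv hker) = MonoidHom.id _ :=
  hom_ext (fun x => QuotientGroup.induction_on x fun g => by simp [toQuotient, ofQuotient])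
    (by simp [toQuotient, ofQuotient])

def equivQuotient : mappingTorus φ ≃* mappingTorus (QuotientGroup.map N N φ hinv) :=
  MonoidHom.toMulEquiv _ _ (ofQuotient_comp_toQuotient φ N hinv hker)
    (toQuotient_comp_ofQuotient φ N hinv hker)

end Quotient

end mappingTorus

open mappingTorus in
theorem mappingTorus_iso_quotient {G : Type*} [Group G] (φ : G →* G) (N : Subgroup G)
    [N.Normal] (hinv : ∀ g ∈ N, φ g ∈ N) (hker : N ≤ (mappingTorus.ofBase φ).ker) :
    Nonempty (mappingTorus φ ≃* mappingTorus (QuotientGroup.map N N φ (fun g hg => hinv g hg))) :=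
  ⟨equivQuotient φ N hinv hker⟩
end

section
/- Let φ be an endomorphism of a group G and N = ker(φ^k) where ker(φ^k) = ker(φ^n) for all n ≥ k. Then the kernel of the canonical homomorphism G → M(φ) contains N. -/
open Monoid

/-! Iterating the defining relation gives `t⁻ⁿ g tⁿ = φⁿ(g)` in `M(φ)`, so if `φⁿ(g) = 1` then a
conjugate of the image of `g` is trivial, hence so is the image itself. -/

namespace mappingTorus

variable {G : Type*} [Group G] (φ : G →* G)

theorem ofBase_map (g : G) : ofBase φ (φ g) = (t φ)⁻¹ * ofBase φ g * t φ := by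
  rw [eq_comm, ← mul_inv_eq_one]
  exact (QuotientGroup.eq_one_iff _).2 (Subgroup.subset_normalClosure ⟨g, rfl⟩)

theorem ofBase_iterate (n : ℕ) (g : G) :
    ofBase φ (φ^[n] g) = (t φ ^ n)⁻¹ * ofBase φ g * t φ ^ n := by
  induction n generalizing g with
  | zero => simp
  | succ n ih =>
    rw [Function.iterate_succ_apply, ih, ofBase_map]
    group

theorem ofBase_eq_one_of_iterate_eq_one {n : ℕ} {g : G} (hg : φ^[n] g = 1) :
    ofBase φ g = 1 := by
  have h := ofBase_iterate φ n g
  rwa [hg, map_one, eq_comm, mul_assoc, inv_mul_eq_one, right_eq_mul] at h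

end mappingTorus

theorem stable_kernel_le_ker_ofBase_general {G : Type*} [Group G] (φ : Monoid.End G) (k : ℕ) :
    MonoidHom.ker (φ ^ k) ≤
      @MonoidHom.ker _ _ _ (instGroupMappingTorus (φ : G →* G)).toMonoid.toMulOneClass
        (mappingTorus.ofBase (φ : G →* G)) :=
  fun _ hg => mappingTorus.ofBase_eq_one_of_iterate_eq_one (φ : G →* G) hg

theorem stable_kernel_le_ker_ofBase {G : Type*} [Group G] (φ : Monoid.End G) (k : ℕ)
    (hk : 0 < k) (hstab : ∀ n : ℕ, k ≤ n → MonoidHom.ker (φ ^ k) = MonoidHom.ker (φ ^ n)) :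
    MonoidHom.ker (φ ^ k) ≤
      @MonoidHom.ker _ _ _ (instGroupMappingTorus (φ : G →* G)).toMonoid.toMulOneClass
        (mappingTorus.ofBase (φ : G →* G)) :=
  stable_kernel_le_ker_ofBase_general φ k
end
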